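/- arXiv:2005.03564 — 2 statements merged into one kernel-verified Lean document; each statement's English description precedes it below -/
import Mathlib

section
/- Let α_A and α_H be real numbers with 0 < α_A < α_H. Let (A_l)_{l≥1} and (H_l)_{l≥1} be mutually independent [0,1]-valued random variables, where each A_l has law with density α_A x^{α_A − 1} on [0,1] with respect to Lebesgue measure and each H_l has law with density α_H x^{α_H − 1} on [0,1] with respect to Lebesgue measure. Define λ = α_H/(α_H + 1) − α_A/(α_A + 1), K = 1 + λ, σ² = (α_A/(α_A + 2) − (α_A/(α_A + 1))²) + (α_H/(α_H + 2) − (α_H/(α_H + 1))²), and c = λ² / (2(σ² + Kλ/3)). Then for every positive integer k, the probability that there exists some M ≥ k with Σ_{l=1}^M A_l ≥ Σ_{l=1}^M H_l is at most e^{-c·k} / (1 − e^{-c}). -/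
/-
Set `X l = A l - H l + lam`. Since `lam = E H - E A`, these increments are centred, bounded by
`K = 1 + lam`, and, `A l` and `H l` being independent, have variance `σ2`. Comparing the
exponential series with a geometric one gives Bernstein's bound
`E exp (t X) ≤ exp (t² σ2 / (2 (1 - t K / 3)))`; a Chernoff bound at `t = lam / (σ2 + K lam / 3)`
then yields `P (∑_{l<M} H l ≤ ∑_{l<M} A l) = P (M lam ≤ ∑_{l<M} X l) ≤ exp (-c M)`, and a union
bound over `M ≥ k` sums this geometric tail.
-/

open MeasureTheory ProbabilityTheory

/-- The block-power distribution with stake power `α`: the measure on `[0,1]` with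
density `x ↦ α * x ^ (α - 1)` with respect to Lebesgue measure. -/
noncomputable def blockPowerMeasure (α : ℝ) : Measure ℝ :=
  (volume.restrict (Set.Icc (0 : ℝ) 1)).withDensity
    fun x => ENNReal.ofReal (α * x ^ (α - 1))

open Finset
open scoped Nat

theorem Nat.two_mul_three_pow_le_factorial_add_two (n : ℕ) : 2 * 3 ^ n ≤ (n + 2)! := by
  induction n with
  | zero => simp
  | succ n ih =>
    rw [Nat.factorial_succ, pow_succ]
    nlinarith

theorem Real.exp_le_one_add_add_sq_div {u b : ℝ} (hub : |u| ≤ b) (hb : b < 3) :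
    Real.exp u ≤ 1 + u + u ^ 2 / (2 * (1 - b / 3)) := by
  have hb0 : 0 ≤ b := (abs_nonneg u).trans hub
  have hexp : HasSum (fun n : ℕ => u ^ (n + 2) / (n + 2)!) (Real.exp u - (1 + u)) := by
    have h := NormedSpace.expSeries_div_hasSum_exp u
    rw [← Real.exp_eq_exp_ℝ] at h
    simpa [Finset.sum_range_succ] using (hasSum_nat_add_iff' 2).mpr h
  have hgeom : HasSum (fun n : ℕ => u ^ 2 / 2 * (b / 3) ^ n) (u ^ 2 / 2 * (1 - b / 3)⁻¹) :=
    (hasSum_geometric_of_lt_one (by positivity) (by linarith)).mul_left _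
  have hterm (n : ℕ) : u ^ (n + 2) / (n + 2)! ≤ u ^ 2 / 2 * (b / 3) ^ n := by
    have hfact : (2 * 3 ^ n : ℝ) ≤ (n + 2)! := mod_cast n.two_mul_three_pow_le_factorial_add_two
    have hpow : u ^ (n + 2) ≤ u ^ 2 * b ^ n := calc
      u ^ (n + 2) ≤ |u| ^ 2 * |u| ^ n := by
          rw [← pow_add, add_comm, ← abs_pow]; exact le_abs_self _
      _ ≤ u ^ 2 * b ^ n := by rw [sq_abs]; gcongr
    calc u ^ (n + 2) / (n + 2)! ≤ u ^ 2 * b ^ n / (2 * 3 ^ n) :=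
          div_le_div₀ (by positivity) hpow (by positivity) hfact
      _ = u ^ 2 / 2 * (b / 3) ^ n := by rw [div_pow]; ring
  have htail := hasSum_le hterm hexp hgeom
  have hrw : u ^ 2 / 2 * (1 - b / 3)⁻¹ = u ^ 2 / (2 * (1 - b / 3)) := by
    rw [← div_eq_mul_inv, div_div]
  linarith

theorem div_add_one_lt_div_add_one {a b : ℝ} (ha : 0 ≤ a) (hab : a < b) :
    a / (a + 1) < b / (b + 1) := by
  rw [div_lt_div_iff₀ (by linarith) (by linarith)]
  linarith

theorem div_add_two_sub_sq_div_add_one_pos {a : ℝ} (ha : 0 < a) :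
    0 < a / (a + 2) - (a / (a + 1)) ^ 2 := by
  rw [sub_pos, div_pow, div_lt_div_iff₀ (by positivity) (by linarith)]
  nlinarith

section

variable {Ω : Type*} [MeasurableSpace Ω] {μ : Measure Ω}

theorem measure_exists_ge_le_of_le_exp {P : ℕ → Ω → Prop} {c : ℝ} (hc : 0 < c) (k : ℕ)
    (hP : ∀ M, k ≤ M → μ {ω | P M ω} ≤ ENNReal.ofReal (Real.exp (-(c * M)))) :
    μ {ω | ∃ M, k ≤ M ∧ P M ω}
      ≤ ENNReal.ofReal (Real.exp (-(c * k)) / (1 - Real.exp (-c))) := by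
  have hr : Real.exp (-c) < 1 := Real.exp_lt_one_iff.2 (neg_lt_zero.2 hc)
  have hgeom : HasSum (fun j : ℕ => Real.exp (-(c * k)) * Real.exp (-c) ^ j)
      (Real.exp (-(c * k)) / (1 - Real.exp (-c))) := by
    simpa [div_eq_mul_inv] using (hasSum_geometric_of_lt_one (Real.exp_nonneg _) hr).mul_left _
  have hsub : {ω | ∃ M, k ≤ M ∧ P M ω} ⊆ ⋃ j : ℕ, {ω | P (k + j) ω} := by
    rintro ω ⟨M, hkM, hM⟩
    exact Set.mem_iUnion.2 ⟨M - k, by rwa [Nat.add_sub_cancel' hkM]⟩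
  calc μ {ω | ∃ M, k ≤ M ∧ P M ω} ≤ ∑' j : ℕ, μ {ω | P (k + j) ω} :=
        (measure_mono hsub).trans (measure_iUnion_le _)
    _ ≤ ∑' j : ℕ, ENNReal.ofReal (Real.exp (-(c * k)) * Real.exp (-c) ^ j) := by
        refine ENNReal.tsum_le_tsum fun j => (hP _ (Nat.le_add_right k j)).trans_eq ?_
        rw [← Real.exp_nat_mul, ← Real.exp_add]
        congr 2
        push_cast
        ring
    _ = ENNReal.ofReal (Real.exp (-(c * k)) / (1 - Real.exp (-c))) := by
        rw [← ENNReal.ofReal_tsum_of_nonneg (fun j => by positivity) hgeom.summable,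
          hgeom.tsum_eq]

namespace ProbabilityTheory

theorem mgf_le_exp_of_abs_le [IsProbabilityMeasure μ] {X : Ω → ℝ} {b t : ℝ}
    (hX : AEMeasurable X μ) (hXb : ∀ᵐ ω ∂μ, |X ω| ≤ b) (hmean : μ[X] = 0)
    (ht : 0 ≤ t) (htb : t * b < 3) :
    mgf X μ t ≤ Real.exp (t ^ 2 / (2 * (1 - t * b / 3)) * Var[X; μ]) := by
  set D := t ^ 2 / (2 * (1 - t * b / 3))
  have hmemLp : MemLp X 2 μ :=
    memLp_of_bounded (hXb.mono fun _ h => abs_le.1 h) hX.aestronglyMeasurable 2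
  have hint := hmemLp.integrable one_le_two
  have hint_sq := hmemLp.integrable_sq
  have hint_exp : Integrable (fun ω => Real.exp (t * X ω)) μ :=
    integrable_exp_mul_of_le t b ht hX (hXb.mono fun _ h => (le_abs_self _).trans h)
  have hpoint : ∀ᵐ ω ∂μ, Real.exp (t * X ω) ≤ 1 + t * X ω + D * X ω ^ 2 :=
    hXb.mono fun ω h => by
      have := Real.exp_le_one_add_add_sq_div (u := t * X ω) (b := t * b)
        (by rw [abs_mul, abs_of_nonneg ht]; exact mul_le_mul_of_nonneg_left h ht) htb
      convert this using 1
      ring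
  calc mgf X μ t ≤ ∫ ω, (1 + t * X ω + D * X ω ^ 2) ∂μ :=
        integral_mono_ae hint_exp (((integrable_const 1).add (hint.const_mul t)).add
          (hint_sq.const_mul D)) hpoint
    _ = 1 + D * Var[X; μ] := by
        rw [integral_add (f := fun ω => 1 + t * X ω)
            ((integrable_const 1).add (hint.const_mul t)) (hint_sq.const_mul D),
          integral_add (integrable_const 1) (hint.const_mul t), integral_const_mul,
          integral_const_mul, hmean, variance_of_integral_eq_zero hX hmean]
        simp
    _ ≤ Real.exp (D * Var[X; μ]) := by linarith [Real.add_one_le_exp (D * Var[X; μ])]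

theorem integrable_exp_mul_sum_range_and_mgf_le [IsProbabilityMeasure μ] {X : ℕ → Ω → ℝ}
    {t c : ℝ} (hindep : ∀ M, IndepFun (∑ l ∈ range M, X l) (X M) μ)
    (hint : ∀ l, Integrable (fun ω => Real.exp (t * X l ω)) μ)
    (hmgf : ∀ l, mgf (X l) μ t ≤ Real.exp c) (M : ℕ) :
    Integrable (fun ω => Real.exp (t * (∑ l ∈ range M, X l) ω)) μ ∧
      mgf (∑ l ∈ range M, X l) μ t ≤ Real.exp (c * M) := by
  induction M with
  | zero => simp
  | succ M ih =>
    rw [sum_range_succ]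
    refine ⟨(hindep M).integrable_exp_mul_add ih.1 (hint M), ?_⟩
    rw [(hindep M).mgf_add ih.1.aestronglyMeasurable (hint M).aestronglyMeasurable]
    calc mgf (∑ l ∈ range M, X l) μ t * mgf (X M) μ t ≤ Real.exp (c * M) * Real.exp c :=
          mul_le_mul ih.2 (hmgf M) mgf_nonneg (Real.exp_nonneg _)
      _ = Real.exp (c * ↑(M + 1)) := by rw [← Real.exp_add]; congr 1; push_cast; ring

theorem measure_sum_range_ge_le_bernstein [IsProbabilityMeasure μ] {X : ℕ → Ω → ℝ}
    {K v ε : ℝ} (hX : ∀ l, AEMeasurable (X l) μ)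
    (hindep : ∀ M, IndepFun (∑ l ∈ range M, X l) (X M) μ)
    (hXK : ∀ l, ∀ᵐ ω ∂μ, |X l ω| ≤ K) (hmean : ∀ l, μ[X l] = 0)
    (hvar : ∀ l, Var[X l; μ] ≤ v) (hv : 0 < v) (hε : 0 < ε) (M : ℕ) :
    μ.real {ω | M * ε ≤ ∑ l ∈ range M, X l ω}
      ≤ Real.exp (-(ε ^ 2 / (2 * (v + K * ε / 3)) * M)) := by
  have hK : 0 ≤ K := by
    obtain ⟨ω, hω⟩ := (hXK 0).exists
    exact (abs_nonneg _).trans hω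
  set c := ε ^ 2 / (2 * (v + K * ε / 3)) with hc_def
  -- with this `t`, `t ^ 2 * v / (2 * (1 - t * K / 3)) = c` and `t * ε = 2 * c`
  set t := ε / (v + K * ε / 3) with ht_def
  have hden : 0 < v + K * ε / 3 := by positivity
  have ht : 0 < t := by positivity
  have hone_sub : 1 - t * K / 3 = v / (v + K * ε / 3) := by
    rw [ht_def]; field_simp; ring
  have htK : t * K < 3 := by
    have : 0 < 1 - t * K / 3 := by rw [hone_sub]; positivity
    linarith
  have hmgf (l : ℕ) : mgf (X l) μ t ≤ Real.exp c := by
    refine (mgf_le_exp_of_abs_le (hX l) (hXK l) (hmean l) ht.le htK).trans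
      (Real.exp_le_exp.2 ?_)
    calc t ^ 2 / (2 * (1 - t * K / 3)) * Var[X l; μ] ≤ t ^ 2 / (2 * (1 - t * K / 3)) * v := by
          rw [hone_sub]; gcongr; exact hvar l
      _ = c := by rw [hone_sub, ht_def, hc_def]; field_simp
  have hint (l : ℕ) : Integrable (fun ω => Real.exp (t * X l ω)) μ :=
    integrable_exp_mul_of_le t K ht.le (hX l) ((hXK l).mono fun _ h => (le_abs_self _).trans h)
  obtain ⟨hint_sum, hmgf_sum⟩ := integrable_exp_mul_sum_range_and_mgf_le hindep hint hmgf M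
  calc μ.real {ω | M * ε ≤ ∑ l ∈ range M, X l ω}
      ≤ Real.exp (-t * (M * ε)) * mgf (∑ l ∈ range M, X l) μ t := by
        simpa only [Finset.sum_apply] using measure_ge_le_exp_mul_mgf (M * ε) ht.le hint_sum
    _ ≤ Real.exp (-t * (M * ε)) * Real.exp (c * M) := by gcongr
    _ = Real.exp (-(c * M)) := by
        rw [← Real.exp_add]; congr 1
        rw [ht_def, hc_def]; field_simp; ring

theorem iIndepFun.indepFun_sum_range_sumElim {β : Type*} [MeasurableSpace β]
    {A H : ℕ → Ω → β} (hindep : iIndepFun (Sum.elim A H) μ)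
    (hA : ∀ l, Measurable (A l)) (hH : ∀ l, Measurable (H l))
    {F : β → β → ℝ} (hF : Measurable (Function.uncurry F)) (M : ℕ) :
    IndepFun (∑ l ∈ range M, fun ω => F (A l ω) (H l ω))
      (fun ω => F (A M ω) (H M ω)) μ := by
  set S := (range M).disjSum (range M)
  set T := ({M} : Finset ℕ).disjSum {M}
  have hST : Disjoint S T := by simpa [S, T, disjoint_left] using fun a ha => ha.ne
  have hmeas : ∀ i, Measurable (Sum.elim A H i) := by
    rintro (l | l)
    exacts [hA l, hH l]
  let g₁ : (S → β) → ℝ := fun v =>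
    ∑ l ∈ (range M).attach, F (v ⟨.inl l, by simp [S]⟩) (v ⟨.inr l, by simp [S]⟩)
  let g₂ : (T → β) → ℝ := fun v =>
    F (v ⟨.inl M, by simp [T]⟩) (v ⟨.inr M, by simp [T]⟩)
  have hg₁ : Measurable g₁ := by
    refine Finset.measurable_sum _ fun l _ => ?_
    fun_prop
  have hg₂ : Measurable g₂ := by fun_prop
  convert (hindep.indepFun_finset _ _ hST hmeas).comp hg₁ hg₂ using 1
  · ext ω
    simp [g₁, Finset.sum_attach (range M) fun l => F (A l ω) (H l ω)]
  · rfl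

theorem IndepFun.variance_sub_add_const [IsProbabilityMeasure μ] {f g : Ω → ℝ}
    (hfg : IndepFun f g μ) (hf : MemLp f 2 μ) (hg : MemLp g 2 μ) (c : ℝ) :
    Var[fun ω => f ω - g ω + c; μ] = Var[f; μ] + Var[g; μ] := by
  rw [variance_add_const (X := fun ω => f ω - g ω) (hf.sub hg).aestronglyMeasurable,
    variance_fun_sub hf hg, hfg.covariance_eq_zero hf hg]
  ring

theorem integral_pow_blockPowerMeasure {α : ℝ} (hα : 0 < α) (n : ℕ) :
    ∫ x, x ^ n ∂blockPowerMeasure α = α / (α + n) := by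
  have hαn : 0 < α + n := by positivity
  have hintegrand : Set.EqOn (fun x : ℝ => (ENNReal.ofReal (α * x ^ (α - 1))).toReal • x ^ n)
      (fun x => α * x ^ (α + n - 1)) (Set.Ioc 0 1) := fun x hx => by
    dsimp only
    rw [smul_eq_mul, ENNReal.toReal_ofReal (by have := hx.1; positivity),
      show α + n - 1 = α - 1 + n by ring, Real.rpow_add hx.1, Real.rpow_natCast]
    ring
  rw [blockPowerMeasure, integral_withDensity_eq_integral_toReal_smul (by fun_prop)
      (ae_of_all _ fun _ => ENNReal.ofReal_lt_top), integral_Icc_eq_integral_Ioc,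
    setIntegral_congr_fun measurableSet_Ioc hintegrand,
    ← intervalIntegral.integral_of_le zero_le_one,
    intervalIntegral.integral_const_mul, integral_rpow (Or.inl (by linarith)), sub_add_cancel,
    Real.one_rpow, Real.zero_rpow hαn.ne']
  field_simp
  simp

section BlockPowerLaw

variable {f g : Ω → ℝ} {α β : ℝ}

theorem integral_pow_of_map_eq_blockPowerMeasure (hα : 0 < α) (hf : AEMeasurable f μ)
    (hlaw : μ.map f = blockPowerMeasure α) (n : ℕ) :
    ∫ ω, f ω ^ n ∂μ = α / (α + n) := by
  rw [← integral_pow_blockPowerMeasure hα n, ← hlaw,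
    integral_map hf (continuous_pow n).aestronglyMeasurable]

theorem integral_of_map_eq_blockPowerMeasure (hα : 0 < α) (hf : AEMeasurable f μ)
    (hlaw : μ.map f = blockPowerMeasure α) : μ[f] = α / (α + 1) := by
  simpa using integral_pow_of_map_eq_blockPowerMeasure hα hf hlaw 1

theorem variance_of_map_eq_blockPowerMeasure [IsProbabilityMeasure μ] (hα : 0 < α)
    (hf : MemLp f 2 μ) (hlaw : μ.map f = blockPowerMeasure α) :
    Var[f; μ] = α / (α + 2) - (α / (α + 1)) ^ 2 := by
  rw [variance_eq_sub hf, integral_of_map_eq_blockPowerMeasure hα hf.aemeasurable hlaw]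
  simpa using integral_pow_of_map_eq_blockPowerMeasure hα hf.aemeasurable hlaw 2

theorem integral_sub_add_eq_zero_of_map_eq_blockPowerMeasure [IsProbabilityMeasure μ]
    (hα : 0 < α) (hβ : 0 < β) (hf : Integrable f μ) (hg : Integrable g μ)
    (hlawf : μ.map f = blockPowerMeasure α) (hlawg : μ.map g = blockPowerMeasure β) :
    μ[fun ω => f ω - g ω + (β / (β + 1) - α / (α + 1))] = 0 := by
  rw [integral_add (f := fun ω => f ω - g ω) (hf.sub hg) (integrable_const _),
    integral_sub hf hg, integral_of_map_eq_blockPowerMeasure hα hf.aemeasurable hlawf,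
    integral_of_map_eq_blockPowerMeasure hβ hg.aemeasurable hlawg]
  simp

theorem variance_sub_add_of_map_eq_blockPowerMeasure [IsProbabilityMeasure μ]
    (hα : 0 < α) (hβ : 0 < β) (hfg : IndepFun f g μ) (hf : MemLp f 2 μ) (hg : MemLp g 2 μ)
    (hlawf : μ.map f = blockPowerMeasure α) (hlawg : μ.map g = blockPowerMeasure β) (c : ℝ) :
    Var[fun ω => f ω - g ω + c; μ]
      = (α / (α + 2) - (α / (α + 1)) ^ 2) + (β / (β + 2) - (β / (β + 1)) ^ 2) := by
  rw [hfg.variance_sub_add_const hf hg, variance_of_map_eq_blockPowerMeasure hα hf hlawf,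
    variance_of_map_eq_blockPowerMeasure hβ hg hlawg]

end BlockPowerLaw

end ProbabilityTheory

end

theorem quicksync_finality_violation_bound_general
    {Ω : Type*} [MeasurableSpace Ω] (μ : Measure Ω) [IsProbabilityMeasure μ]
    (αA αH : ℝ) (hαA : 0 < αA) (hαAH : αA < αH)
    (A H : ℕ → Ω → ℝ)
    (hmeasA : ∀ l, Measurable (A l)) (hmeasH : ∀ l, Measurable (H l))
    (hrangeA : ∀ l ω, A l ω ∈ Set.Icc (0 : ℝ) 1)
    (hrangeH : ∀ l ω, H l ω ∈ Set.Icc (0 : ℝ) 1)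
    (hindep : iIndepFun (Sum.elim A H) μ)
    (hlawA : ∀ l, Measure.map (A l) μ = blockPowerMeasure αA)
    (hlawH : ∀ l, Measure.map (H l) μ = blockPowerMeasure αH)
    (lam K σ2 c : ℝ)
    (hlam : lam = αH / (αH + 1) - αA / (αA + 1))
    (hK : K = 1 + lam)
    (hσ2 : σ2 = (αA / (αA + 2) - (αA / (αA + 1)) ^ 2)
        + (αH / (αH + 2) - (αH / (αH + 1)) ^ 2))
    (hc : c = lam ^ 2 / (2 * (σ2 + K * lam / 3)))
    (k : ℕ) :
    μ {ω | ∃ M : ℕ, k ≤ M ∧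
        ∑ l ∈ Finset.range M, H l ω ≤ ∑ l ∈ Finset.range M, A l ω}
      ≤ ENNReal.ofReal (Real.exp (-(c * k)) / (1 - Real.exp (-c))) := by
  have hαH : 0 < αH := hαA.trans hαAH
  have hlam_pos : 0 < lam := hlam ▸ sub_pos.2 (div_add_one_lt_div_add_one hαA.le hαAH)
  have hσ2_pos : 0 < σ2 := hσ2 ▸ add_pos (div_add_two_sub_sq_div_add_one_pos hαA)
    (div_add_two_sub_sq_div_add_one_pos hαH)
  have hA2 (l : ℕ) : MemLp (A l) 2 μ :=
    memLp_of_bounded (ae_of_all _ (hrangeA l)) (hmeasA l).aestronglyMeasurable 2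
  have hH2 (l : ℕ) : MemLp (H l) 2 μ :=
    memLp_of_bounded (ae_of_all _ (hrangeH l)) (hmeasH l).aestronglyMeasurable 2
  set X : ℕ → Ω → ℝ := fun l ω => A l ω - H l ω + lam
  have hX_bound (l : ℕ) : ∀ᵐ ω ∂μ, |X l ω| ≤ K := ae_of_all _ fun ω => by
    obtain ⟨⟨hA0, hA1⟩, ⟨hH0, hH1⟩⟩ := And.intro (hrangeA l ω) (hrangeH l ω)
    exact abs_le.2 ⟨by linarith, by linarith⟩
  have hX_mean (l : ℕ) : μ[X l] = 0 := by
    simpa only [X, hlam] using integral_sub_add_eq_zero_of_map_eq_blockPowerMeasure hαA hαH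
      ((hA2 l).integrable one_le_two) ((hH2 l).integrable one_le_two) (hlawA l) (hlawH l)
  have hX_var (l : ℕ) : Var[X l; μ] = σ2 := hσ2 ▸ variance_sub_add_of_map_eq_blockPowerMeasure
    hαA hαH (hindep.indepFun (i := .inl l) (j := .inr l) (by simp)) (hA2 l) (hH2 l) (hlawA l)
    (hlawH l) lam
  have hX_indep (M : ℕ) : IndepFun (∑ l ∈ range M, X l) (X M) μ :=
    hindep.indepFun_sum_range_sumElim hmeasA hmeasH (F := fun a h => a - h + lam) (by fun_prop) M
  refine measure_exists_ge_le_of_le_exp (by rw [hc, hK]; positivity) k fun M _ => ?_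
  have hevent : {ω | ∑ l ∈ range M, H l ω ≤ ∑ l ∈ range M, A l ω}
      = {ω | M * lam ≤ ∑ l ∈ range M, X l ω} := by
    ext ω
    simp [X, sum_add_distrib, sum_sub_distrib]
  rw [hevent, ← ofReal_measureReal, hc]
  exact ENNReal.ofReal_le_ofReal <| measure_sum_range_ge_le_bernstein
    (fun l => ((hmeasA l).sub (hmeasH l)).add_const lam |>.aemeasurable) hX_indep hX_bound hX_mean
    (fun l => (hX_var l).le) hσ2_pos hlam_pos M

/-- **Common-prefix / k-finality bound.** Let `0 < α_A < α_H` and let `(A l)` and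
`(H l)` be mutually independent `[0,1]`-valued random variables, `A l` with block-power
law of stake power `α_A` and `H l` with block-power law of stake power `α_H`. With
`lam = α_H/(α_H+1) - α_A/(α_A+1)`, `K = 1 + lam`,
`σ2 = (α_A/(α_A+2) - (α_A/(α_A+1))²) + (α_H/(α_H+2) - (α_H/(α_H+1))²)` and
`c = lam² / (2 * (σ2 + K * lam / 3))`, the probability that for some `M ≥ k` the
adversarial chain power `∑_{l<M} A l` matches or exceeds the honest chain power
`∑_{l<M} H l` is at most `exp (-c * k) / (1 - exp (-c))`. -/
theorem quicksync_finality_violation_bound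
    {Ω : Type*} [MeasurableSpace Ω] (μ : Measure Ω) [IsProbabilityMeasure μ]
    (αA αH : ℝ) (hαA : 0 < αA) (hαAH : αA < αH)
    (A H : ℕ → Ω → ℝ)
    (hmeasA : ∀ l, Measurable (A l)) (hmeasH : ∀ l, Measurable (H l))
    (hrangeA : ∀ l ω, A l ω ∈ Set.Icc (0 : ℝ) 1)
    (hrangeH : ∀ l ω, H l ω ∈ Set.Icc (0 : ℝ) 1)
    (hindep : iIndepFun (Sum.elim A H) μ)
    (hlawA : ∀ l, Measure.map (A l) μ = blockPowerMeasure αA)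
    (hlawH : ∀ l, Measure.map (H l) μ = blockPowerMeasure αH)
    (lam K σ2 c : ℝ)
    (hlam : lam = αH / (αH + 1) - αA / (αA + 1))
    (hK : K = 1 + lam)
    (hσ2 : σ2 = (αA / (αA + 2) - (αA / (αA + 1)) ^ 2)
        + (αH / (αH + 2) - (αH / (αH + 1)) ^ 2))
    (hc : c = lam ^ 2 / (2 * (σ2 + K * lam / 3)))
    (k : ℕ) (hk : 0 < k) :
    μ {ω | ∃ M : ℕ, k ≤ M ∧
        ∑ l ∈ Finset.range M, H l ω ≤ ∑ l ∈ Finset.range M, A l ω}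
      ≤ ENNReal.ofReal (Real.exp (-(c * k)) / (1 - Real.exp (-c))) :=
  quicksync_finality_violation_bound_general μ αA αH hαA hαAH A H hmeasA hmeasH hrangeA hrangeH
    hindep hlawA hlawH lam K σ2 c hlam hK hσ2 hc k
end

section
/- Let α₁, α₂ > 0 be real numbers, and let X₁ and X₂ be independent [0,1]-valued random variables on a probability space (Ω, P) such that Xᵢ has law with density αᵢ x^{αᵢ−1} on [0,1] with respect to Lebesgue measure, for i = 1, 2. Then P(X₁ > X₂) = α₁ / (α₁ + α₂). -/
open MeasureTheory ProbabilityTheory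

/-!
By independence the joint law of `(X₁, X₂)` is a product measure, so Tonelli gives
`P(X₂ < X₁) = ∫ P(X₂ < x) dP_{X₁}(x)`, and `P(X₂ < x) = x ^ α₂` on `[0,1]`. What remains is
`∫₀¹ α₁ x ^ (α₁ - 1) x ^ α₂ dx = α₁ / (α₁ + α₂)`.
-/

open Set

theorem measure_lt_eq_lintegral_map_Iio_of_indepFun {β Ω : Type*} [LinearOrder β]
    [TopologicalSpace β] [OrderClosedTopology β] [SecondCountableTopology β]
    [MeasurableSpace β] [OpensMeasurableSpace β] [MeasurableSpace Ω]
    {μ : Measure Ω} [IsFiniteMeasure μ] {X Y : Ω → β} (hX : Measurable X) (hY : Measurable Y)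
    (hXY : IndepFun X Y μ) :
    μ {ω | Y ω < X ω} = ∫⁻ x, μ.map Y (Iio x) ∂μ.map X := by
  have hlt : MeasurableSet {p : β × β | p.2 < p.1} := measurableSet_lt measurable_snd measurable_fst
  rw [show {ω | Y ω < X ω} = (fun ω => (X ω, Y ω)) ⁻¹' {p | p.2 < p.1} from rfl,
    ← Measure.map_apply (hX.prodMk hY) hlt,
    (indepFun_iff_map_prod_eq_prod_map_map hX.aemeasurable hY.aemeasurable).mp hXY,
    Measure.prod_apply hlt]
  rfl

theorem lintegral_Ioc_rpow_sub_one {γ a : ℝ} (hγ : 0 < γ) (ha : 0 ≤ a) :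
    ∫⁻ x in Ioc 0 a, ENNReal.ofReal (x ^ (γ - 1)) = ENNReal.ofReal (a ^ γ / γ) := by
  have hint : IntegrableOn (fun x : ℝ => x ^ (γ - 1)) (Ioc 0 a) :=
    (intervalIntegrable_iff_integrableOn_Ioc_of_le ha).mp
      (intervalIntegral.intervalIntegrable_rpow' (by linarith))
  rw [← ofReal_integral_eq_lintegral_ofReal hint
      ((ae_restrict_mem measurableSet_Ioc).mono fun x hx => Real.rpow_nonneg hx.1.le _),
    ← intervalIntegral.integral_of_le ha, integral_rpow (Or.inl (by linarith)),
    sub_add_cancel, Real.zero_rpow hγ.ne', sub_zero]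

theorem blockPowerMeasure_apply_Iio {α x : ℝ} (hα : 0 < α) (hx : x ∈ Icc (0 : ℝ) 1) :
    blockPowerMeasure α (Iio x) = ENNReal.ofReal (x ^ α) := by
  have hIco : Iio x ∩ Icc 0 1 = Ico 0 x := by
    ext y
    simp only [mem_inter_iff, mem_Iio, mem_Icc, mem_Ico]
    constructor
    · rintro ⟨hyx, hy0, -⟩
      exact ⟨hy0, hyx⟩
    · rintro ⟨hy0, hyx⟩
      exact ⟨hyx, hy0, hyx.le.trans hx.2⟩
  rw [blockPowerMeasure, withDensity_apply _ measurableSet_Iio,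
    Measure.restrict_restrict measurableSet_Iio, hIco, Measure.restrict_congr_set Ico_ae_eq_Ioc]
  simp_rw [ENNReal.ofReal_mul hα.le]
  rw [lintegral_const_mul _ (by fun_prop), lintegral_Ioc_rpow_sub_one hα hx.1,
    ← ENNReal.ofReal_mul hα.le, mul_div_cancel₀ _ hα.ne']

theorem lintegral_rpow_blockPowerMeasure {α β : ℝ} (hα : 0 ≤ α) (hαβ : 0 < α + β) :
    ∫⁻ x, ENNReal.ofReal (x ^ β) ∂blockPowerMeasure α = ENNReal.ofReal (α / (α + β)) := by
  have hmul : ∀ x ∈ Ioc (0 : ℝ) 1, ENNReal.ofReal (α * x ^ (α - 1)) * ENNReal.ofReal (x ^ β)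
      = ENNReal.ofReal α * ENNReal.ofReal (x ^ (α + β - 1)) := fun x hx => by
    rw [← ENNReal.ofReal_mul hα,
      ← ENNReal.ofReal_mul (mul_nonneg hα (Real.rpow_nonneg hx.1.le _)), mul_assoc,
      ← Real.rpow_add hx.1, sub_add_eq_add_sub]
  rw [blockPowerMeasure, lintegral_withDensity_eq_lintegral_mul _ (by fun_prop) (by fun_prop),
    ← Measure.restrict_congr_set Ioc_ae_eq_Icc]
  simp only [Pi.mul_apply]
  rw [setLIntegral_congr_fun measurableSet_Ioc hmul, lintegral_const_mul _ (by fun_prop),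
    lintegral_Ioc_rpow_sub_one hαβ zero_le_one, Real.one_rpow, ← ENNReal.ofReal_mul hα,
    mul_one_div]

theorem blockpower_win_probability_general
    {Ω : Type*} [MeasurableSpace Ω] (μ : Measure Ω) [IsProbabilityMeasure μ]
    (α₁ α₂ : ℝ) (hα₁ : 0 < α₁) (hα₂ : 0 < α₂)
    (X₁ X₂ : Ω → ℝ) (hmeas₁ : Measurable X₁) (hmeas₂ : Measurable X₂)
    (hindep : IndepFun X₁ X₂ μ)
    (hlaw₁ : Measure.map X₁ μ = blockPowerMeasure α₁)
    (hlaw₂ : Measure.map X₂ μ = blockPowerMeasure α₂) :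
    μ {ω | X₂ ω < X₁ ω} = ENNReal.ofReal (α₁ / (α₁ + α₂)) := by
  have hsupp : ∀ᵐ x ∂blockPowerMeasure α₁, x ∈ Icc (0 : ℝ) 1 :=
    (withDensity_absolutelyContinuous _ _).ae_le (ae_restrict_mem measurableSet_Icc)
  rw [measure_lt_eq_lintegral_map_Iio_of_indepFun hmeas₁ hmeas₂ hindep, hlaw₁, hlaw₂,
    lintegral_congr_ae (hsupp.mono fun x hx => blockPowerMeasure_apply_Iio hα₂ hx)]
  exact lintegral_rpow_blockPowerMeasure hα₁.le (by linarith)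

/-- **Proof-of-Stake selection probability.** If `X₁` and `X₂` are independent
`[0,1]`-valued random variables whose laws are the block-power distributions with
stake powers `α₁` and `α₂` respectively, then the probability that `X₁ > X₂`
(i.e. that the first node wins) is `α₁ / (α₁ + α₂)`. -/
theorem blockpower_win_probability
    {Ω : Type*} [MeasurableSpace Ω] (μ : Measure Ω) [IsProbabilityMeasure μ]
    (α₁ α₂ : ℝ) (hα₁ : 0 < α₁) (hα₂ : 0 < α₂)
    (X₁ X₂ : Ω → ℝ) (hmeas₁ : Measurable X₁) (hmeas₂ : Measurable X₂)
    (hrange₁ : ∀ ω, X₁ ω ∈ Set.Icc (0 : ℝ) 1)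
    (hrange₂ : ∀ ω, X₂ ω ∈ Set.Icc (0 : ℝ) 1)
    (hindep : IndepFun X₁ X₂ μ)
    (hlaw₁ : Measure.map X₁ μ = blockPowerMeasure α₁)
    (hlaw₂ : Measure.map X₂ μ = blockPowerMeasure α₂) :
    μ {ω | X₂ ω < X₁ ω} = ENNReal.ofReal (α₁ / (α₁ + α₂)) :=
  blockpower_win_probability_general μ α₁ α₂ hα₁ hα₂ X₁ X₂ hmeas₁ hmeas₂ hindep hlaw₁ hlaw₂
end
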